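/- The top-down random walk on a ZDD samples from the Gibbs distribution: with B_v as in the bottom-up recursion (B_⊤ = 1, B_⊥ = 0, B_v = B_{c⁰_v} + exp(−c_{l_v}) B_{c¹_v}), a random walk from the root choosing the 0-arc at node v with probability B_{c⁰_v}/B_v and the 1-arc with probability exp(−c_{l_v})B_{c¹_v}/B_v never reaches ⊥, and its trajectory R satisfies P(trajectory = R) = exp(−c·1_{X(R)}) / Σ_{S∈𝒮} exp(−c·1_S) for each root-to-⊤ path R. -/

import Mathlib

open Finset

/-- A ZDD over resources `[n]`: nodes `Fin m` with two terminals (`Sum.inr true` = ⊤,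
`Sum.inr false` = ⊥), each non-terminal node has a label and 0- and 1-children, indices
strictly decrease along arcs (DAG) and labels strictly increase along arcs (ordered,
so paths correspond bijectively to the represented sets). -/
structure ZDD (n : ℕ) where
  m : ℕ
  lbl : Fin m → Fin n
  c0 : Fin m → Fin m ⊕ Bool
  c1 : Fin m → Fin m ⊕ Bool
  root : Fin m
  desc0 : ∀ v w, c0 v = Sum.inl w → (w : ℕ) < v
  desc1 : ∀ v w, c1 v = Sum.inl w → (w : ℕ) < v
  ord0 : ∀ v w, c0 v = Sum.inl w → lbl v < lbl w
  ord1 : ∀ v w, c1 v = Sum.inl w → lbl v < lbl w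

/-! Since labels increase along arcs, the label `l_v` of a node occurs in no set represented
below it. Hence the two branches at `v` represent disjoint families, `S ↦ insert l_v S` is
injective on the 1-branch, and a set represented at `v` determines the branch the walk takes.
Unfolding the recursion for `B` then shows that `B_v` is the sum of the Gibbs weights
`exp (-c(S))` over the family at `v`, and along the walk the factors `B_child / B_v` telescope
to `1 / B_root` while each 1-arc contributes `exp (-c_{l_v})`. -/

section GibbsWeight

variable {α : Type*}

noncomputable def gibbsWeight (c : α → ℝ) (S : Finset α) : ℝ :=
  Real.exp (-(∑ i ∈ S, c i))

@[simp]
lemma gibbsWeight_empty (c : α → ℝ) : gibbsWeight c ∅ = 1 := by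
  simp [gibbsWeight]

lemma gibbsWeight_pos (c : α → ℝ) (S : Finset α) : 0 < gibbsWeight c S :=
  Real.exp_pos _

lemma gibbsWeight_insert [DecidableEq α] (c : α → ℝ) {a : α} {S : Finset α} (ha : a ∉ S) :
    gibbsWeight c (insert a S) = Real.exp (-c a) * gibbsWeight c S := by
  rw [gibbsWeight, gibbsWeight, sum_insert ha, neg_add, Real.exp_add]

end GibbsWeight

namespace ZDD

variable {n : ℕ} (Z : ZDD n)

def rank : Fin Z.m ⊕ Bool → ℕ :=
  Sum.elim (fun v => v + 1) fun _ => 0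

lemma rank_c0_lt (v : Fin Z.m) : Z.rank (Z.c0 v) < Z.rank (.inl v) := by
  cases h : Z.c0 v with
  | inl w => simpa [rank] using Z.desc0 v w h
  | inr b => simp [rank]

lemma rank_c1_lt (v : Fin Z.m) : Z.rank (Z.c1 v) < Z.rank (.inl v) := by
  cases h : Z.c1 v with
  | inl w => simpa [rank] using Z.desc1 v w h
  | inr b => simp [rank]

theorem induction {motive : Fin Z.m ⊕ Bool → Prop} (terminal : ∀ b, motive (.inr b))
    (node : ∀ v, motive (Z.c0 v) → motive (Z.c1 v) → motive (.inl v)) :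
    ∀ x, motive x
  | .inr b => terminal b
  | .inl v => node v (induction terminal node (Z.c0 v)) (induction terminal node (Z.c1 v))
termination_by x => Z.rank x
decreasing_by exacts [Z.rank_c0_lt v, Z.rank_c1_lt v]

def minLbl : Fin Z.m ⊕ Bool → WithTop (Fin n) :=
  Sum.elim (fun v => Z.lbl v) fun _ => ⊤

lemma lbl_lt_minLbl_c0 (v : Fin Z.m) : (Z.lbl v : WithTop (Fin n)) < Z.minLbl (Z.c0 v) := by
  cases h : Z.c0 v with
  | inl w => exact WithTop.coe_lt_coe.2 (Z.ord0 v w h)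
  | inr b => exact WithTop.coe_lt_top _

lemma lbl_lt_minLbl_c1 (v : Fin Z.m) : (Z.lbl v : WithTop (Fin n)) < Z.minLbl (Z.c1 v) := by
  cases h : Z.c1 v with
  | inl w => exact WithTop.coe_lt_coe.2 (Z.ord1 v w h)
  | inr b => exact WithTop.coe_lt_top _

structure Represents (F : Fin Z.m ⊕ Bool → Finset (Finset (Fin n))) : Prop where
  top : F (.inr true) = {∅}
  bot : F (.inr false) = ∅
  node : ∀ v, F (.inl v) = F (Z.c0 v) ∪ (F (Z.c1 v)).image (insert (Z.lbl v))

structure IsPartitionFunction (c : Fin n → ℝ) (B : Fin Z.m ⊕ Bool → ℝ) : Prop where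
  top : B (.inr true) = 1
  bot : B (.inr false) = 0
  node : ∀ v, B (.inl v) = B (Z.c0 v) + Real.exp (-c (Z.lbl v)) * B (Z.c1 v)

/-- The walk's trajectory is recorded by the set `S` it collects, which determines it. -/
structure IsWalkLaw (c : Fin n → ℝ) (B : Fin Z.m ⊕ Bool → ℝ)
    (P : Fin Z.m ⊕ Bool → Finset (Fin n) → ℝ) : Prop where
  top : ∀ S, P (.inr true) S = if S = ∅ then 1 else 0
  bot : ∀ S, P (.inr false) S = 0
  node : ∀ v S, P (.inl v) S =
    B (Z.c0 v) / B (.inl v) * P (Z.c0 v) S +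
      Real.exp (-c (Z.lbl v)) * B (Z.c1 v) / B (.inl v) *
        (if Z.lbl v ∈ S then P (Z.c1 v) (S.erase (Z.lbl v)) else 0)

namespace Represents

variable {Z} {F : Fin Z.m ⊕ Bool → Finset (Finset (Fin n))}

lemma minLbl_le (hF : Z.Represents F) : ∀ x, ∀ S ∈ F x, ∀ i ∈ S, Z.minLbl x ≤ i := by
  refine Z.induction (fun b S hS i hi => ?_) (fun v ih0 ih1 S hS i hi => ?_)
  · cases b
    · simp [hF.bot] at hS
    · rw [hF.top, mem_singleton] at hS
      simp [hS] at hi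
  · rw [hF.node, mem_union, mem_image] at hS
    rcases hS with hS | ⟨T, hT, rfl⟩
    · exact (Z.lbl_lt_minLbl_c0 v).le.trans (ih0 S hS i hi)
    · rcases mem_insert.1 hi with rfl | hi
      · exact le_rfl
      · exact (Z.lbl_lt_minLbl_c1 v).le.trans (ih1 T hT i hi)

lemma lbl_notMem_of_mem_c0 (hF : Z.Represents F) {v : Fin Z.m} {S : Finset (Fin n)}
    (hS : S ∈ F (Z.c0 v)) : Z.lbl v ∉ S :=
  fun h => (Z.lbl_lt_minLbl_c0 v).not_ge (hF.minLbl_le _ S hS _ h)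

lemma lbl_notMem_of_mem_c1 (hF : Z.Represents F) {v : Fin Z.m} {S : Finset (Fin n)}
    (hS : S ∈ F (Z.c1 v)) : Z.lbl v ∉ S :=
  fun h => (Z.lbl_lt_minLbl_c1 v).not_ge (hF.minLbl_le _ S hS _ h)

lemma disjoint_branches (hF : Z.Represents F) (v : Fin Z.m) :
    Disjoint (F (Z.c0 v)) ((F (Z.c1 v)).image (insert (Z.lbl v))) := by
  refine disjoint_left.2 fun S hS hS' => ?_
  obtain ⟨T, -, rfl⟩ := mem_image.1 hS'
  exact hF.lbl_notMem_of_mem_c0 hS (mem_insert_self _ _)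

lemma injOn_insert_lbl (hF : Z.Represents F) (v : Fin Z.m) :
    Set.InjOn (insert (Z.lbl v)) (F (Z.c1 v) : Set (Finset (Fin n))) := fun T hT T' hT' h => by
  rw [← erase_insert (hF.lbl_notMem_of_mem_c1 hT), h,
    erase_insert (hF.lbl_notMem_of_mem_c1 hT')]

end Represents

variable {Z} {F : Fin Z.m ⊕ Bool → Finset (Finset (Fin n))} {c : Fin n → ℝ}
  {B : Fin Z.m ⊕ Bool → ℝ} {P : Fin Z.m ⊕ Bool → Finset (Fin n) → ℝ}

lemma IsPartitionFunction.eq_sum_gibbsWeight (hB : Z.IsPartitionFunction c B)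
    (hF : Z.Represents F) : ∀ x, B x = ∑ S ∈ F x, gibbsWeight c S := by
  refine Z.induction (fun b => ?_) (fun v ih0 ih1 => ?_)
  · cases b <;> simp [hB.bot, hB.top, hF.bot, hF.top]
  · rw [hB.node, hF.node, sum_union (hF.disjoint_branches v),
      sum_image (hF.injOn_insert_lbl v), ih0, ih1, mul_sum]
    congr 1
    exact sum_congr rfl fun T hT => (gibbsWeight_insert c (hF.lbl_notMem_of_mem_c1 hT)).symm

lemma IsPartitionFunction.pos_of_mem (hB : Z.IsPartitionFunction c B) (hF : Z.Represents F)
    {x : Fin Z.m ⊕ Bool} {S : Finset (Fin n)} (hS : S ∈ F x) : 0 < B x := by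
  rw [hB.eq_sum_gibbsWeight hF]
  exact sum_pos (fun S _ => gibbsWeight_pos c S) ⟨S, hS⟩

lemma IsWalkLaw.eq_zero_of_notMem (hP : Z.IsWalkLaw c B P) (hF : Z.Represents F) :
    ∀ x, ∀ S ∉ F x, P x S = 0 := by
  refine Z.induction (fun b S hS => ?_) (fun v ih0 ih1 S hS => ?_)
  · cases b
    · exact hP.bot S
    · rw [hF.top, mem_singleton] at hS
      simp [hP.top, hS]
  · obtain ⟨hS0, hS1⟩ := not_or.1 (by rwa [hF.node, mem_union] at hS)
    rw [hP.node, ih0 S hS0, mul_zero, zero_add]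
    split_ifs with hl
    · rw [ih1 _ fun h => hS1 (mem_image.2 ⟨_, h, insert_erase hl⟩), mul_zero]
    · rw [mul_zero]

lemma IsWalkLaw.eq_gibbsWeight_div (hP : Z.IsWalkLaw c B P) (hB : Z.IsPartitionFunction c B)
    (hF : Z.Represents F) : ∀ x, ∀ S ∈ F x, P x S = gibbsWeight c S / B x := by
  refine Z.induction (fun b S hS => ?_) (fun v ih0 ih1 S hS => ?_)
  · cases b
    · simp [hF.bot] at hS
    · rw [hF.top, mem_singleton] at hS
      simp [hP.top, hB.top, hS]
  · rw [hF.node, mem_union, mem_image] at hS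
    rcases hS with hS | ⟨T, hT, rfl⟩
    · have hB0 := (hB.pos_of_mem hF hS).ne'
      rw [hP.node, if_neg (hF.lbl_notMem_of_mem_c0 hS), mul_zero, add_zero, ih0 S hS]
      field_simp
    · have hl := hF.lbl_notMem_of_mem_c1 hT
      have hB1 := (hB.pos_of_mem hF hT).ne'
      have hS0 : insert (Z.lbl v) T ∉ F (Z.c0 v) :=
        fun h => hF.lbl_notMem_of_mem_c0 h (mem_insert_self _ _)
      rw [hP.node, hP.eq_zero_of_notMem hF _ _ hS0, mul_zero, zero_add,
        if_pos (mem_insert_self _ _), erase_insert hl, ih1 T hT, gibbsWeight_insert c hl]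
      field_simp

end ZDD

theorem zdd_random_walk_gibbs {n : ℕ} (Z : ZDD n) (c : Fin n → ℝ)
    (F : Fin Z.m ⊕ Bool → Finset (Finset (Fin n)))
    (hFtop : F (Sum.inr true) = {∅}) (hFbot : F (Sum.inr false) = ∅)
    (hF : ∀ v : Fin Z.m,
      F (Sum.inl v) = F (Z.c0 v) ∪ (F (Z.c1 v)).image (insert (Z.lbl v)))
    (B : Fin Z.m ⊕ Bool → ℝ)
    (hBtop : B (Sum.inr true) = 1) (hBbot : B (Sum.inr false) = 0)
    (hB : ∀ v : Fin Z.m,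
      B (Sum.inl v) = B (Z.c0 v) + Real.exp (-(c (Z.lbl v))) * B (Z.c1 v))
    (hBroot : 0 < B (Sum.inl Z.root))
    -- P x S : probability that the top-down random walk from node `x` recovers the set `S`
    (P : Fin Z.m ⊕ Bool → Finset (Fin n) → ℝ)
    (hPtop : ∀ S, P (Sum.inr true) S = if S = ∅ then 1 else 0)
    (hPbot : ∀ S, P (Sum.inr false) S = 0)
    (hP : ∀ (v : Fin Z.m) (S : Finset (Fin n)),
      P (Sum.inl v) S =
        (B (Z.c0 v) / B (Sum.inl v)) * P (Z.c0 v) S +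
          (Real.exp (-(c (Z.lbl v))) * B (Z.c1 v) / B (Sum.inl v)) *
            (if Z.lbl v ∈ S then P (Z.c1 v) (S.erase (Z.lbl v)) else 0)) :
    (∀ S ∈ F (Sum.inl Z.root),
        P (Sum.inl Z.root) S =
          Real.exp (-(∑ i ∈ S, c i)) / B (Sum.inl Z.root)) ∧
      ∑ S ∈ F (Sum.inl Z.root), P (Sum.inl Z.root) S = 1 := by
  have hFZ : Z.Represents F := ⟨hFtop, hFbot, hF⟩
  have hBZ : Z.IsPartitionFunction c B := ⟨hBtop, hBbot, hB⟩
  have hPZ : Z.IsWalkLaw c B P := ⟨hPtop, hPbot, hP⟩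
  have hgibbs := hPZ.eq_gibbsWeight_div hBZ hFZ (.inl Z.root)
  refine ⟨hgibbs, ?_⟩
  rw [sum_congr rfl hgibbs, ← sum_div, ← hBZ.eq_sum_gibbsWeight hFZ]
  exact div_self hBroot.ne'
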